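/- arXiv:1712.03107 — 5 statements merged into one kernel-verified Lean document; each statement's English description precedes it below -/
import Mathlib

section
/- Let w be a real constant with 0 ≤ w ≤ 1/3, and consider the planar vector field F(x,y) = (x[3(w+1)(x-1)-2y], y[3(w+1)x-2(y+1)]) on ℝ². Then: (i) the set of zeros of F is exactly {(0,0), (1,0), (0,-1)}; (ii) the Jacobian of F at (0,0) has eigenvalues -3(w+1) and -2, so (0,0) (the de Sitter point dS) is a hyperbolic attractor; (iii) the Jacobian at (1,0) has eigenvalues 3(w+1) and 3w+1, so (1,0) (the Friedmann point F) is a hyperbolic repeller; (iv) the Jacobian at (0,-1) has eigenvalues -(3w+1) and 2, so (0,-1) (the Milne point M) is a hyperbolic saddle. -/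
open Polynomial

/-- The spatially curved ΛCDM vector field `x' = x[3(w+1)(x-1)-2y]`, `y' = y[3(w+1)x-2(y+1)]`. -/
noncomputable def f3 (w x y : ℝ) : ℝ := x * (3 * (w + 1) * (x - 1) - 2 * y)

noncomputable def g3 (w x y : ℝ) : ℝ := y * (3 * (w + 1) * x - 2 * (y + 1))

/-- Jacobian matrix of the curved ΛCDM vector field at a point `p`. -/
noncomputable def jac3 (w : ℝ) (p : ℝ × ℝ) : Matrix (Fin 2) (Fin 2) ℝ :=
  !![deriv (fun x => f3 w x p.2) p.1, deriv (fun y => f3 w p.1 y) p.2;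
     deriv (fun x => g3 w x p.2) p.1, deriv (fun y => g3 w p.1 y) p.2]

private lemma dq (a b c x0 : ℝ) : deriv (fun x => a*x^2 + b*x + c) x0 = 2*a*x0 + b := by
  have h : HasDerivAt (fun x => a*x^2 + (b*x + c)) (a*(↑2*x0^(2-1)) + b*1) x0 :=
    ((hasDerivAt_pow 2 x0).const_mul a).add (((hasDerivAt_id x0).const_mul b).add_const c)
  have h2 : HasDerivAt (fun x => a*x^2 + b*x + c) (2*a*x0 + b) x0 := by
    convert h using 2 <;> ring
  exact h2.deriv

private lemma df3x (w y x0 : ℝ) :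
    deriv (fun x => f3 w x y) x0 = 3*(w+1)*(2*x0-1) - 2*y := by
  have e : (fun x => f3 w x y)
      = fun x => (3*(w+1))*x^2 + (-(3*(w+1)) - 2*y)*x + 0 := by
    funext x; simp only [f3]; ring
  rw [e, dq]; ring

private lemma df3y (w x y0 : ℝ) :
    deriv (fun y => f3 w x y) y0 = -2*x := by
  have e : (fun y => f3 w x y)
      = fun y => 0*y^2 + (-2*x)*y + 3*(w+1)*x*(x-1) := by
    funext y; simp only [f3]; ring
  rw [e, dq]; ring

private lemma dg3x (w y x0 : ℝ) :
    deriv (fun x => g3 w x y) x0 = 3*(w+1)*y := by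
  have e : (fun x => g3 w x y)
      = fun x => 0*x^2 + (3*(w+1)*y)*x + (-(2*y*(y+1))) := by
    funext x; simp only [g3]; ring
  rw [e, dq]; ring

private lemma dg3y (w x y0 : ℝ) :
    deriv (fun y => g3 w x y) y0 = 3*(w+1)*x - 4*y0 - 2 := by
  have e : (fun y => g3 w x y)
      = fun y => (-2)*y^2 + (3*(w+1)*x - 2)*y + 0 := by
    funext y; simp only [g3]; ring
  rw [e, dq]; ring

/-- Fixed points of the negatively curved ΛCDM system and their linear stability:
the de Sitter point `(0,0)` is a hyperbolic attractor (eigenvalues `-3(w+1), -2`),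
the Friedmann point `(1,0)` a hyperbolic repeller (eigenvalues `3(w+1), 3w+1`),
and the Milne point `(0,-1)` a hyperbolic saddle (eigenvalues `-(3w+1), 2`). -/
theorem curved_lcdm_critical_points (w : ℝ) (hw0 : 0 ≤ w) (hw1 : w ≤ 1 / 3) :
    ({p : ℝ × ℝ | f3 w p.1 p.2 = 0 ∧ g3 w p.1 p.2 = 0} = {(0, 0), (1, 0), (0, -1)}) ∧
    ((jac3 w (0, 0)).charpoly = (X - C (-(3 * (w + 1)))) * (X - C (-2)) ∧
      -(3 * (w + 1)) < 0 ∧ (-2 : ℝ) < 0) ∧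
    ((jac3 w (1, 0)).charpoly = (X - C (3 * (w + 1))) * (X - C (3 * w + 1)) ∧
      0 < 3 * (w + 1) ∧ 0 < 3 * w + 1) ∧
    ((jac3 w (0, -1)).charpoly = (X - C (-(3 * w + 1))) * (X - C 2) ∧
      -(3 * w + 1) < 0 ∧ (0 : ℝ) < 2) := by
  have hw1' : (0:ℝ) < w + 1 := by linarith
  refine ⟨?_, ⟨?_, by linarith, by norm_num⟩, ⟨?_, by linarith, by linarith⟩,
    ⟨?_, by linarith, by norm_num⟩⟩
  · ext ⟨x, y⟩
    simp only [Set.mem_setOf_eq, Set.mem_insert_iff, Set.mem_singleton_iff, Prod.mk.injEq]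
    constructor
    · rintro ⟨hf, hg⟩
      rcases mul_eq_zero.mp hf with hx | hx
      · rcases mul_eq_zero.mp hg with hy | hy
        · exact Or.inl ⟨hx, hy⟩
        · subst hx
          right; right; exact ⟨rfl, by linarith⟩
      · rcases mul_eq_zero.mp hg with hy | hy
        · subst hy
          have h : (w + 1) * (x - 1) = 0 := by linarith
          rcases mul_eq_zero.mp h with h' | h'
          · exact absurd h' (by linarith)
          · right; left; exact ⟨by linarith, rfl⟩
        · exfalso; linarith
    · rintro (⟨hx, hy⟩ | ⟨hx, hy⟩ | ⟨hx, hy⟩) <;> subst hx <;> subst hy <;>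
        constructor <;> simp [f3, g3] <;> ring
  all_goals {
    rw [Matrix.charpoly, Matrix.det_fin_two]
    simp only [jac3, Matrix.charmatrix_apply_eq, Matrix.charmatrix_apply_ne, Ne,
      one_ne_zero, zero_ne_one, not_false_eq_true,
      Matrix.cons_val', Matrix.cons_val_zero, Matrix.cons_val_one, Matrix.head_cons,
      Matrix.empty_val', Matrix.cons_val_fin_one, Matrix.of_apply,
      Matrix.vecHead, df3x, df3y, dg3x, dg3y]
    ring_nf
    simp only [map_add, map_mul, map_sub, map_neg, map_ofNat, map_one, map_pow, C_1, map_zero]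
    ring }
end

section
/- Consider the planar system x' = √(3/2) y², y' = -√(3/2) xy (the restriction of the compactified power-law quintessence system to the invariant plane z = 1). Then: (i) the quantity x² + y² is a first integral, i.e. it is constant along every solution, so all orbits lie on circles x² + y² = A²; (ii) for every A > 0 and every η₀ ∈ ℝ, the pair of functions x(η) = A·tanh(A√(3/2)(η-η₀)), y(η) = A·sech(A√(3/2)(η-η₀)) is a solution of the system, lying on the circle x² + y² = A². -/
/-! The right-hand side is `√(3/2) y · (y, -x)`, a multiple of the rotation field, so
`(x² + y²)' = 2 (x x' + y y') = 0`. For the explicit orbit put `u = A √(3/2) (η - η₀)`: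
`tanh' = sech²` and `sech' = -tanh · sech` give the two equations for `A tanh u`, `A sech u`,
and `tanh² + sech² = 1` puts the orbit on the circle of radius `A`. -/

open Real

theorem Real.hasDerivAt_tanh (t : ℝ) : HasDerivAt tanh (cosh t ^ 2)⁻¹ t := by
  have hquot := (hasDerivAt_sinh t).div (hasDerivAt_cosh t) (cosh_pos t).ne'
  rw [← sq, ← sq, cosh_sq_sub_sinh_sq, one_div] at hquot
  rwa [show tanh = sinh / cosh from funext tanh_eq_sinh_div_cosh]

theorem Real.hasDerivAt_inv_cosh (t : ℝ) :
    HasDerivAt (fun s => (cosh s)⁻¹) (-(tanh t / cosh t)) t :=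
  ((hasDerivAt_cosh t).inv (cosh_pos t).ne').congr_deriv <| by
    rw [tanh_eq_sinh_div_cosh]; ring

theorem Real.tanh_sq_add_inv_cosh_sq (t : ℝ) : tanh t ^ 2 + (cosh t)⁻¹ ^ 2 = 1 := by
  rw [tanh_eq_sinh_div_cosh]
  field_simp
  linarith [cosh_sq_sub_sinh_sq t]

theorem sq_add_sq_eq_of_hasDerivAt_rotation {x y f : ℝ → ℝ}
    (hx : ∀ t, HasDerivAt x (f t * y t) t) (hy : ∀ t, HasDerivAt y (-(f t * x t)) t)
    (t₁ t₂ : ℝ) : x t₁ ^ 2 + y t₁ ^ 2 = x t₂ ^ 2 + y t₂ ^ 2 := by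
  have hconst : ∀ t, HasDerivAt (fun s => x s ^ 2 + y s ^ 2) 0 t := fun t =>
    (((hx t).pow 2).add ((hy t).pow 2)).congr_deriv (by push_cast; ring)
  exact is_const_of_deriv_eq_zero (fun t => (hconst t).differentiableAt)
    (fun t => (hconst t).deriv) t₁ t₂

theorem hasDerivAt_mul_sub_const (k η₀ η : ℝ) : HasDerivAt (fun s => k * (s - η₀)) k η := by
  simpa using ((hasDerivAt_id η).sub_const η₀).const_mul k

section ScaledTanhSech

variable (A c η₀ η : ℝ)

theorem hasDerivAt_mul_tanh_affine :
    HasDerivAt (fun s => A * tanh (A * c * (s - η₀)))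
      (c * (A / cosh (A * c * (η - η₀))) ^ 2) η :=
  (((hasDerivAt_tanh _).comp η (hasDerivAt_mul_sub_const _ _ _)).const_mul A).congr_deriv
    (by ring)

theorem hasDerivAt_div_cosh_affine :
    HasDerivAt (fun s => A / cosh (A * c * (s - η₀)))
      (-c * (A * tanh (A * c * (η - η₀))) * (A / cosh (A * c * (η - η₀)))) η := by
  simp_rw [div_eq_mul_inv A]
  exact (((hasDerivAt_inv_cosh _).comp η (hasDerivAt_mul_sub_const _ _ _)).const_mul A).congr_deriv
    (by ring)

end ScaledTanhSech

/-- On the invariant plane `z = 1` of the compactified power-law quintessence system,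
`x' = √(3/2) y²`, `y' = -√(3/2) x y`: the quantity `x² + y²` is a first integral (all orbits
lie on circles), and for every `A > 0`, `η₀`, the pair
`x(η) = A tanh(A√(3/2)(η-η₀))`, `y(η) = A sech(A√(3/2)(η-η₀))` is a solution lying on the
circle `x² + y² = A²`. -/
theorem power_law_z1_plane_solutions :
    (∀ x y : ℝ → ℝ,
      (∀ η : ℝ, HasDerivAt x (Real.sqrt (3 / 2) * (y η) ^ 2) η) →
      (∀ η : ℝ, HasDerivAt y (-Real.sqrt (3 / 2) * x η * y η) η) →
      ∀ η₁ η₂ : ℝ, (x η₁) ^ 2 + (y η₁) ^ 2 = (x η₂) ^ 2 + (y η₂) ^ 2) ∧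
    (∀ A η₀ : ℝ, 0 < A →
      (∀ η : ℝ,
        HasDerivAt (fun s => A * Real.tanh (A * Real.sqrt (3 / 2) * (s - η₀)))
          (Real.sqrt (3 / 2) * (A / Real.cosh (A * Real.sqrt (3 / 2) * (η - η₀))) ^ 2) η) ∧
      (∀ η : ℝ,
        HasDerivAt (fun s => A / Real.cosh (A * Real.sqrt (3 / 2) * (s - η₀)))
          (-Real.sqrt (3 / 2) * (A * Real.tanh (A * Real.sqrt (3 / 2) * (η - η₀)))
            * (A / Real.cosh (A * Real.sqrt (3 / 2) * (η - η₀)))) η) ∧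
      (∀ η : ℝ,
        (A * Real.tanh (A * Real.sqrt (3 / 2) * (η - η₀))) ^ 2
          + (A / Real.cosh (A * Real.sqrt (3 / 2) * (η - η₀))) ^ 2 = A ^ 2)) := by
  refine ⟨fun x y hx hy => ?_, fun A η₀ _ => ?_⟩
  · exact sq_add_sq_eq_of_hasDerivAt_rotation (f := fun η => √(3 / 2) * y η)
      (fun η => (hx η).congr_deriv (by ring)) (fun η => (hy η).congr_deriv (by ring))
  · refine ⟨hasDerivAt_mul_tanh_affine A _ η₀, hasDerivAt_div_cosh_affine A _ η₀, fun η => ?_⟩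
    calc (A * tanh (A * √(3 / 2) * (η - η₀))) ^ 2 + (A / cosh (A * √(3 / 2) * (η - η₀))) ^ 2
        = A ^ 2 * (tanh (A * √(3 / 2) * (η - η₀)) ^ 2
            + (cosh (A * √(3 / 2) * (η - η₀)))⁻¹ ^ 2) := by ring
      _ = A ^ 2 := by rw [tanh_sq_add_inv_cosh_sq, mul_one]
end

section
/- Define the function W(x,y) = x·(x²y - (x-y)³) + 8y³·(-y + (x+y)²), which is the derivative of V(x,y) = x²/2 + 2y⁴ along the flow of the system ẋ = x²y - (x-y)³, ẏ = -y + (x+y)². Then: (i) the fourth-order homogeneous part of W, namely the quartic form -x⁴ + 4x³y - 3x²y² + xy³ - 8y⁴, is strictly negative for every (x,y) ≠ (0,0); (ii) consequently there exists δ > 0 such that W(x,y) < 0 for all (x,y) with 0 < x² + y² < δ². Hence V is a strict Lyapunov function and the origin is an asymptotically stable equilibrium of the system ẋ = x²y - (x-y)³, ẏ = -y + (x+y)² in the case γ = 1. -/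
/-!
`W = Q + 8y³(x+y)²` where the quartic part `Q` is negative definite,
`-Q = (x² - 2xy - y²)² + y²(x - 5y/2)² + 3y⁴/4`, so `Q ≤ -(x²+y²)²/100`, while the remainder is
bounded by `16|y|(x²+y²)²`. Hence `W ≤ -(x²+y²)²/500 ≤ -V²/500` on the strip `|y| ≤ 1/2000`.
Since `V ≥ 2y⁴`, a trajectory with `V < 2·2000⁻⁴` initially can never leave the strip, so along it
`V` obeys `V' ≤ -V²/500`: it decreases (stability) and tends to `0` (attractivity).
-/

open Filter

/-- The derivative of the Lyapunov candidate `V(x,y) = x²/2 + 2y⁴` along the flow of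
`ẋ = x²y - (x-y)³, ẏ = -y + (x+y)²` (the case `γ = 1`). -/
noncomputable def W10 (x y : ℝ) : ℝ :=
  x * (x ^ 2 * y - (x - y) ^ 3) + 8 * y ^ 3 * (-y + (x + y) ^ 2)

/-- The planar vector field `ẋ = x²y - (x-y)³, ẏ = -y + (x+y)²` (the case `γ = 1`). -/
noncomputable def F10 (p : ℝ × ℝ) : ℝ × ℝ :=
  (p.1 ^ 2 * p.2 - (p.1 - p.2) ^ 3, -p.2 + (p.1 + p.2) ^ 2)

open Set Topology

section Comparison

variable {g g' : ℝ → ℝ} {a : ℝ}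

theorem Convex.antitoneOn_of_hasDerivAt_nonpos {D : Set ℝ} (hD : Convex ℝ D)
    (hg : ∀ t ∈ D, HasDerivAt g (g' t) t) (hg' : ∀ t ∈ interior D, g' t ≤ 0) :
    AntitoneOn g D :=
  antitoneOn_of_hasDerivWithinAt_nonpos hD
    (fun t ht => (hg t ht).continuousAt.continuousWithinAt)
    (fun t ht => (hg t (interior_subset ht)).hasDerivWithinAt) hg'

theorem lt_of_hasDerivAt_nonpos_of_lt {c : ℝ} (hg : ∀ t ∈ Ici a, HasDerivAt g (g' t) t)
    (ha : g a < c) (hg' : ∀ t ∈ Ici a, g t < c → g' t ≤ 0) : ∀ t ∈ Ici a, g t < c := by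
  intro t ht
  by_contra! hct
  have hcont : ContinuousOn g (Icc a t) := fun s hs =>
    (hg s hs.1).continuousAt.continuousWithinAt
  have hcompact : IsCompact (Icc a t ∩ g ⁻¹' Ici c) :=
    isCompact_Icc.of_isClosed_subset
      (hcont.preimage_isClosed_of_isClosed isClosed_Icc isClosed_Ici) inter_subset_left
  obtain ⟨T, ⟨⟨haT, hTt⟩, hcT⟩, hfirst⟩ :=
    hcompact.exists_isLeast ⟨t, ⟨⟨ht, le_rfl⟩, hct⟩⟩
  have hbelow : ∀ s ∈ Ico a T, g s < c := fun s hs =>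
    lt_of_not_ge fun hcs => hs.2.not_ge (hfirst ⟨⟨hs.1, hs.2.le.trans hTt⟩, hcs⟩)
  have hanti : AntitoneOn g (Icc a T) :=
    (convex_Icc a T).antitoneOn_of_hasDerivAt_nonpos (fun s hs => hg s hs.1) fun s hs => by
      rw [interior_Icc] at hs
      exact hg' s hs.1.le (hbelow s ⟨hs.1.le, hs.2⟩)
  have hT : g T ≤ g a := hanti ⟨le_rfl, haT⟩ ⟨haT, le_rfl⟩ haT
  exact (hcT.trans hT).not_gt ha

theorem exists_lt_of_hasDerivAt_le_neg {η κ : ℝ} (hκ : 0 < κ)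
    (hg : ∀ t ∈ Ici a, HasDerivAt g (g' t) t) (hg' : ∀ t ∈ Ici a, η ≤ g t → g' t ≤ -κ) :
    ∃ t ∈ Ici a, g t < η := by
  by_contra! hη
  have hanti : AntitoneOn (fun t => g t + κ * t) (Ici a) :=
    (convex_Ici a).antitoneOn_of_hasDerivAt_nonpos
      (fun t ht => (hg t ht).add ((hasDerivAt_id t).const_mul κ)) fun t ht => by
        have := hg' t (interior_subset ht) (hη t (interior_subset ht))
        simp only [mul_one]
        linarith
  set T := a + (g a - η) / κ + 1
  have haT : a ≤ T := by
    have : 0 ≤ (g a - η) / κ := div_nonneg (sub_nonneg.2 (hη a self_mem_Ici)) hκ.le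
    linarith
  have hdecay : g T + κ * T ≤ g a + κ * a := hanti self_mem_Ici haT haT
  have hκT : κ * T = κ * a + (g a - η) + κ := by
    simp only [T, mul_add, mul_div_cancel₀ _ hκ.ne', mul_one]
  linarith [hη T haT]

theorem tendsto_zero_of_hasDerivAt_le_neg_sq {κ : ℝ} (hκ : 0 < κ)
    (hg : ∀ t ∈ Ici a, HasDerivAt g (g' t) t) (hg₀ : ∀ t ∈ Ici a, 0 ≤ g t)
    (hg' : ∀ t ∈ Ici a, g' t ≤ -κ * g t ^ 2) : Tendsto g atTop (𝓝 0) := by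
  have hanti : AntitoneOn g (Ici a) :=
    (convex_Ici a).antitoneOn_of_hasDerivAt_nonpos hg fun t ht => by
      have := hg' t (interior_subset ht)
      nlinarith [sq_nonneg (g t)]
  refine tendsto_order.2 ⟨fun b hb => ?_, fun η hη => ?_⟩
  · filter_upwards [eventually_ge_atTop a] with t ht using hb.trans_le (hg₀ t ht)
  · obtain ⟨T, hT, hgT⟩ :=
      exists_lt_of_hasDerivAt_le_neg (η := η) (mul_pos hκ (pow_pos hη 2)) hg fun t ht hηt =>
        (hg' t ht).trans (by nlinarith [pow_le_pow_left₀ hη.le hηt 2])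
    filter_upwards [eventually_ge_atTop T] with t ht
    exact (hanti hT (le_trans hT ht) ht).trans_lt hgT

end Comparison

section Lyapunov

noncomputable def V10 (x y : ℝ) : ℝ := x ^ 2 / 2 + 2 * y ^ 4

noncomputable def W10Quartic (x y : ℝ) : ℝ :=
  -x ^ 4 + 4 * x ^ 3 * y - 3 * x ^ 2 * y ^ 2 + x * y ^ 3 - 8 * y ^ 4

theorem W10_eq_deriv (x y : ℝ) :
    W10 x y = deriv (fun s => s ^ 2 / 2 + 2 * y ^ 4) x * (x ^ 2 * y - (x - y) ^ 3)
      + deriv (fun s => x ^ 2 / 2 + 2 * s ^ 4) y * (-y + (x + y) ^ 2) := by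
  have hx : deriv (fun s : ℝ => s ^ 2 / 2 + 2 * y ^ 4) x = x := by
    rw [(((hasDerivAt_pow 2 x).div_const 2).add_const (2 * y ^ 4)).deriv]
    ring
  have hy : deriv (fun s : ℝ => x ^ 2 / 2 + 2 * s ^ 4) y = 8 * y ^ 3 := by
    rw [(((hasDerivAt_pow 4 y).const_mul 2).const_add (x ^ 2 / 2)).deriv]
    ring
  rw [hx, hy, W10]

theorem hasDerivAt_V10_comp {f : ℝ → ℝ × ℝ} {t : ℝ} (hf : HasDerivAt f (F10 (f t)) t) :
    HasDerivAt (fun s => V10 (f s).1 (f s).2) (W10 (f t).1 (f t).2) t := by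
  have h₁ : HasDerivAt (fun s => (f s).1) (F10 (f t)).1 t := hf.fst
  have h₂ : HasDerivAt (fun s => (f s).2) (F10 (f t)).2 t := hf.snd
  have h : HasDerivAt (fun s => V10 (f s).1 (f s).2) _ t :=
    ((h₁.fun_pow 2).div_const 2).fun_add ((h₂.fun_pow 4).const_mul 2)
  refine h.congr_deriv ?_
  rw [W10, F10]
  push_cast
  ring

theorem W10_eq_quartic_add (x y : ℝ) : W10 x y = W10Quartic x y + 8 * y ^ 3 * (x + y) ^ 2 := by
  rw [W10, W10Quartic]
  ring

theorem W10Quartic_le (x y : ℝ) : W10Quartic x y ≤ -(x ^ 2 + y ^ 2) ^ 2 / 100 := by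
  rw [W10Quartic]
  nlinarith [sq_nonneg (x ^ 2 - 2 * x * y - y ^ 2), sq_nonneg (y * (2 * x - 5 * y)),
    sq_nonneg (x * y), sq_nonneg (y ^ 2)]

theorem W10_le_of_abs_le {x y : ℝ} (hy : |y| ≤ 1 / 2000) :
    W10 x y ≤ -(x ^ 2 + y ^ 2) ^ 2 / 500 := by
  have hrest : y ^ 3 * (x + y) ^ 2 ≤ 2 * |y| * (x ^ 2 + y ^ 2) ^ 2 := by
    have h : y ^ 2 * (x + y) ^ 2 ≤ 2 * (x ^ 2 + y ^ 2) ^ 2 := by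
      nlinarith [sq_nonneg (x - y), sq_nonneg (x * y)]
    calc y ^ 3 * (x + y) ^ 2 = y * (y ^ 2 * (x + y) ^ 2) := by ring
      _ ≤ |y| * (2 * (x ^ 2 + y ^ 2) ^ 2) :=
        mul_le_mul (le_abs_self y) h (by positivity) (abs_nonneg y)
      _ = 2 * |y| * (x ^ 2 + y ^ 2) ^ 2 := by ring
  have hsmall : 2 * |y| * (x ^ 2 + y ^ 2) ^ 2 ≤ 2 * (1 / 2000) * (x ^ 2 + y ^ 2) ^ 2 := by
    gcongr
  rw [W10_eq_quartic_add]
  linarith [W10Quartic_le x y]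

theorem W10_le_neg_sq_V10 {x y : ℝ} (hy : |y| ≤ 1 / 2000) :
    W10 x y ≤ -V10 x y ^ 2 / 500 := by
  have hy4 : y ^ 4 ≤ (1 / 2000) ^ 4 := by
    simpa only [pow_abs, abs_of_nonneg (by positivity : 0 ≤ y ^ 4)] using
      pow_le_pow_left₀ (abs_nonneg y) hy 4
  have hV : V10 x y ^ 2 ≤ (x ^ 2 + y ^ 2) ^ 2 := by
    rw [V10]
    nlinarith [sq_nonneg (x ^ 2 / 2 - 2 * y ^ 4), sq_nonneg (y ^ 2), pow_two_nonneg (y ^ 2),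
      mul_nonneg (sq_nonneg x) (sq_nonneg y)]
  linarith [W10_le_of_abs_le (x := x) hy]

theorem abs_lt_of_V10_lt_left {x y c : ℝ} (hc : 0 ≤ c) (h : V10 x y < c ^ 2 / 2) : |x| < c :=
  abs_lt_of_sq_lt_sq (by rw [V10] at h; nlinarith [pow_two_nonneg (y ^ 2)]) hc

theorem abs_lt_of_V10_lt_right {x y c : ℝ} (hc : 0 ≤ c) (h : V10 x y < 2 * c ^ 4) : |y| < c := by
  rw [← pow_lt_pow_iff_left₀ (abs_nonneg y) hc (by norm_num : 4 ≠ 0), pow_abs,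
    abs_of_nonneg (by positivity)]
  rw [V10] at h
  nlinarith [sq_nonneg x]

theorem W10_le_neg_sq_V10_of_V10_lt {x y : ℝ} (h : V10 x y < 2 * (1 / 2000) ^ 4) :
    W10 x y ≤ -V10 x y ^ 2 / 500 :=
  W10_le_neg_sq_V10 (abs_lt_of_V10_lt_right (by norm_num) h).le

theorem norm_lt_of_V10_lt {p : ℝ × ℝ} {ε : ℝ} (hε : 0 ≤ ε)
    (h : V10 p.1 p.2 < min (ε ^ 2 / 2) (2 * ε ^ 4)) : ‖p‖ < ε := by
  rw [Prod.norm_def, Real.norm_eq_abs, Real.norm_eq_abs]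
  exact max_lt (abs_lt_of_V10_lt_left hε (h.trans_le (min_le_left _ _)))
    (abs_lt_of_V10_lt_right hε (h.trans_le (min_le_right _ _)))

theorem exists_pos_forall_norm_lt_V10_lt {η : ℝ} (hη : 0 < η) :
    ∃ δ > 0, ∀ p : ℝ × ℝ, ‖p‖ < δ → V10 p.1 p.2 < η := by
  have hcont : Continuous fun p : ℝ × ℝ => V10 p.1 p.2 := by
    simp only [V10]
    fun_prop
  obtain ⟨δ, hδ, hball⟩ := Metric.eventually_nhds_iff.1
    (hcont.tendsto 0 (Iio_mem_nhds (by simpa [V10] using hη)))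
  exact ⟨δ, hδ, fun p hp => hball (by simpa using hp)⟩

variable {f : ℝ → ℝ × ℝ}

theorem V10_comp_lt (hf : ∀ t : ℝ, 0 ≤ t → HasDerivAt f (F10 (f t)) t)
    (h₀ : V10 (f 0).1 (f 0).2 < 2 * (1 / 2000) ^ 4) :
    ∀ t ∈ Ici (0 : ℝ), V10 (f t).1 (f t).2 < 2 * (1 / 2000) ^ 4 :=
  lt_of_hasDerivAt_nonpos_of_lt (fun t ht => hasDerivAt_V10_comp (hf t ht)) h₀
    fun t _ hVt => (W10_le_neg_sq_V10_of_V10_lt hVt).trans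
      (by nlinarith [sq_nonneg (V10 (f t).1 (f t).2)])

theorem V10_comp_le (hf : ∀ t : ℝ, 0 ≤ t → HasDerivAt f (F10 (f t)) t)
    (h₀ : V10 (f 0).1 (f 0).2 < 2 * (1 / 2000) ^ 4) {t : ℝ} (ht : 0 ≤ t) :
    V10 (f t).1 (f t).2 ≤ V10 (f 0).1 (f 0).2 :=
  (convex_Ici 0).antitoneOn_of_hasDerivAt_nonpos (fun t ht => hasDerivAt_V10_comp (hf t ht))
    (fun s hs => (W10_le_neg_sq_V10_of_V10_lt (V10_comp_lt hf h₀ s (interior_subset hs))).trans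
      (by nlinarith [sq_nonneg (V10 (f s).1 (f s).2)]))
    self_mem_Ici ht ht

theorem tendsto_V10_comp (hf : ∀ t : ℝ, 0 ≤ t → HasDerivAt f (F10 (f t)) t)
    (h₀ : V10 (f 0).1 (f 0).2 < 2 * (1 / 2000) ^ 4) :
    Tendsto (fun t => V10 (f t).1 (f t).2) atTop (𝓝 0) :=
  tendsto_zero_of_hasDerivAt_le_neg_sq (by norm_num : (0 : ℝ) < 1 / 500)
    (fun t ht => hasDerivAt_V10_comp (hf t ht)) (fun t _ => by rw [V10]; positivity)
    fun t ht => (W10_le_neg_sq_V10_of_V10_lt (V10_comp_lt hf h₀ t ht)).trans_eq (by ring)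

end Lyapunov

/-- Lyapunov stability of the origin for `ẋ = x²y - (x-y)³, ẏ = -y + (x+y)²` with `γ = 1`:
`W` is the derivative of `V = x²/2 + 2y⁴` along the flow; its quartic homogeneous part is
negative definite; hence `W < 0` on a punctured neighbourhood of the origin, `V` is a strict
Lyapunov function, and the origin is asymptotically stable. -/
theorem lyapunov_origin_asymptotically_stable :
    (∀ x y : ℝ, W10 x y =
        deriv (fun s => s ^ 2 / 2 + 2 * y ^ 4) x * (x ^ 2 * y - (x - y) ^ 3)
          + deriv (fun s => x ^ 2 / 2 + 2 * s ^ 4) y * (-y + (x + y) ^ 2)) ∧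
    (∀ x y : ℝ, (x, y) ≠ ((0 : ℝ), (0 : ℝ)) →
      -x ^ 4 + 4 * x ^ 3 * y - 3 * x ^ 2 * y ^ 2 + x * y ^ 3 - 8 * y ^ 4 < 0) ∧
    (∃ δ > (0 : ℝ), ∀ x y : ℝ, 0 < x ^ 2 + y ^ 2 → x ^ 2 + y ^ 2 < δ ^ 2 → W10 x y < 0) ∧
    ((∀ ε > (0 : ℝ), ∃ δ > (0 : ℝ), ∀ f : ℝ → ℝ × ℝ,
        (∀ t : ℝ, 0 ≤ t → HasDerivAt f (F10 (f t)) t) → ‖f 0‖ < δ →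
          ∀ t : ℝ, 0 ≤ t → ‖f t‖ < ε) ∧
      (∃ δ > (0 : ℝ), ∀ f : ℝ → ℝ × ℝ,
        (∀ t : ℝ, 0 ≤ t → HasDerivAt f (F10 (f t)) t) → ‖f 0‖ < δ →
          Tendsto f atTop (nhds 0))) := by
  refine ⟨W10_eq_deriv, fun x y hxy => ?_, ⟨1 / 2000, by norm_num, fun x y hpos hδ => ?_⟩,
    fun ε hε => ?_, ?_⟩
  · have hpos : 0 < x ^ 2 + y ^ 2 := by
      by_contra! h
      exact hxy (Prod.ext (by nlinarith [sq_nonneg x, sq_nonneg y])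
        (by nlinarith [sq_nonneg x, sq_nonneg y]))
    exact (W10Quartic_le x y).trans_lt (by nlinarith [pow_pos hpos 2])
  · have hy : |y| ≤ 1 / 2000 := (abs_lt_of_sq_lt_sq (by nlinarith) (by norm_num)).le
    exact (W10_le_of_abs_le hy).trans_lt (by nlinarith [pow_pos hpos 2])
  · obtain ⟨δ, hδ, hV⟩ := exists_pos_forall_norm_lt_V10_lt
      (lt_min (lt_min (by positivity) (by positivity)) (by norm_num) :
        0 < min (min (ε ^ 2 / 2) (2 * ε ^ 4)) (2 * (1 / 2000 : ℝ) ^ 4))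
    refine ⟨δ, hδ, fun f hf hf₀ t ht => norm_lt_of_V10_lt hε.le ?_⟩
    have h₀ := hV (f 0) hf₀
    exact (V10_comp_le hf (h₀.trans_le (min_le_right _ _)) ht).trans_lt
      (h₀.trans_le (min_le_left _ _))
  · obtain ⟨δ, hδ, hV⟩ :=
      exists_pos_forall_norm_lt_V10_lt (by norm_num : (0 : ℝ) < 2 * (1 / 2000) ^ 4)
    refine ⟨δ, hδ, fun f hf hf₀ => Metric.tendsto_nhds.2 fun ε hε => ?_⟩
    filter_upwards [(tendsto_order.1 (tendsto_V10_comp hf (hV (f 0) hf₀))).2 _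
      (lt_min (by positivity) (by positivity) : (0 : ℝ) < min (ε ^ 2 / 2) (2 * ε ^ 4))]
      with t ht
    rw [dist_zero_right]
    exact norm_lt_of_V10_lt hε.le ht
end

section
/- Let a, ρ_m, ρ_de, p_m, p_de be differentiable real-valued functions on an interval I with a > 0, H := ȧ/a > 0, ρ_m > 0 and ρ_de ≠ 0 on I, satisfying the Friedmann equation 3H² = κ²(ρ_m + ρ_de) and the two separate conservation equations ρ̇_m + 3H(ρ_m + p_m) = 0 and ρ̇_de + 3H(ρ_de + p_de) = 0 (no interaction). Define Ω_de = κ²ρ_de/(3H²), w_m = p_m/ρ_m and w_de = p_de/ρ_de. Then Ω̇_de = 3H·Ω_de·(1-Ω_de)·(w_m - w_de) on I. In particular, if Ω_de is constant on I with a value strictly between 0 and 1 (a scaling solution), then w_de = w_m on I, so the effective equation of state equals w_m and no non-interacting dark energy model admits an accelerating scaling solution when w_m ≥ 0. -/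
/-- For a spatially flat FLRW universe with two separately conserved (non-interacting)
components, matter and dark energy, the relative dark energy density
`Ω_de = κ²ρ_de/(3H²)` obeys `Ω̇_de = 3H Ω_de (1-Ω_de)(w_m - w_de)`; in particular a scaling
solution (`Ω_de` constant in `(0,1)`) forces `w_de = w_m`, so the effective equation of state
equals `w_m` and there is no accelerating scaling solution when `w_m ≥ 0`. -/
theorem no_accelerating_scaling_without_interaction
    (κ : ℝ) (hκ : 0 < κ) (I : Set ℝ) (hI : IsOpen I)
    (a ρm ρde pm pde a' ρm' ρde' : ℝ → ℝ)
    (had : ∀ t ∈ I, HasDerivAt a (a' t) t)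
    (hρmd : ∀ t ∈ I, HasDerivAt ρm (ρm' t) t)
    (hρded : ∀ t ∈ I, HasDerivAt ρde (ρde' t) t)
    (hpmd : ∀ t ∈ I, DifferentiableAt ℝ pm t)
    (hpded : ∀ t ∈ I, DifferentiableAt ℝ pde t)
    (hapos : ∀ t ∈ I, 0 < a t)
    (hH : ∀ t ∈ I, 0 < a' t / a t)
    (hρmpos : ∀ t ∈ I, 0 < ρm t)
    (hρdene : ∀ t ∈ I, ρde t ≠ 0)
    (friedmann : ∀ t ∈ I, 3 * (a' t / a t) ^ 2 = κ ^ 2 * (ρm t + ρde t))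
    (consm : ∀ t ∈ I, ρm' t + 3 * (a' t / a t) * (ρm t + pm t) = 0)
    (consde : ∀ t ∈ I, ρde' t + 3 * (a' t / a t) * (ρde t + pde t) = 0) :
    (∀ t ∈ I,
      HasDerivAt (fun s => κ ^ 2 * ρde s / (3 * (a' s / a s) ^ 2))
        (3 * (a' t / a t) * (κ ^ 2 * ρde t / (3 * (a' t / a t) ^ 2))
            * (1 - κ ^ 2 * ρde t / (3 * (a' t / a t) ^ 2))
            * (pm t / ρm t - pde t / ρde t)) t) ∧
    (∀ c : ℝ, 0 < c → c < 1 →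
      (∀ t ∈ I, κ ^ 2 * ρde t / (3 * (a' t / a t) ^ 2) = c) →
      ∀ t ∈ I,
        pde t / ρde t = pm t / ρm t ∧
        pm t / ρm t * (1 - κ ^ 2 * ρde t / (3 * (a' t / a t) ^ 2))
            + pde t / ρde t * (κ ^ 2 * ρde t / (3 * (a' t / a t) ^ 2)) = pm t / ρm t ∧
        (0 ≤ pm t / ρm t →
          ¬(pm t / ρm t * (1 - κ ^ 2 * ρde t / (3 * (a' t / a t) ^ 2))
              + pde t / ρde t * (κ ^ 2 * ρde t / (3 * (a' t / a t) ^ 2)) < -(1 / 3)))) := by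
  -- sum of densities is positive on I
  have hκ2 : (κ : ℝ) ^ 2 ≠ 0 := by positivity
  have hS : ∀ t ∈ I, 0 < ρm t + ρde t := by
    intro t ht
    have h1 := friedmann t ht
    have h2 := hH t ht
    nlinarith [sq_nonneg (a' t / a t)]
  -- Ω equals ρde / (ρm + ρde) on I
  have heq : ∀ s ∈ I, κ ^ 2 * ρde s / (3 * (a' s / a s) ^ 2)
      = ρde s / (ρm s + ρde s) := by
    intro s hs
    have hSne := (hS s hs).ne'
    rw [friedmann s hs]
    field_simp
  have main : ∀ t ∈ I,
      HasDerivAt (fun s => κ ^ 2 * ρde s / (3 * (a' s / a s) ^ 2))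
        (3 * (a' t / a t) * (κ ^ 2 * ρde t / (3 * (a' t / a t) ^ 2))
            * (1 - κ ^ 2 * ρde t / (3 * (a' t / a t) ^ 2))
            * (pm t / ρm t - pde t / ρde t)) t := by
    intro t ht
    have hSne : ρm t + ρde t ≠ 0 := (hS t ht).ne'
    have hg : HasDerivAt (fun s => ρde s / (ρm s + ρde s))
        ((ρde' t * (ρm t + ρde t) - ρde t * (ρm' t + ρde' t)) / (ρm t + ρde t) ^ 2) t :=
      (hρded t ht).div ((hρmd t ht).add (hρded t ht)) hSne
    have hval : (ρde' t * (ρm t + ρde t) - ρde t * (ρm' t + ρde' t)) / (ρm t + ρde t) ^ 2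
        = 3 * (a' t / a t) * (κ ^ 2 * ρde t / (3 * (a' t / a t) ^ 2))
            * (1 - κ ^ 2 * ρde t / (3 * (a' t / a t) ^ 2))
            * (pm t / ρm t - pde t / ρde t) := by
      rw [heq t ht]
      have hm := consm t ht
      have hd := consde t ht
      have hρm := (hρmpos t ht).ne'
      have hρd := hρdene t ht
      have ha := (hapos t ht).ne'
      have hm' : ρm' t = -(3 * (a' t / a t) * (ρm t + pm t)) := by linarith
      have hd' : ρde' t = -(3 * (a' t / a t) * (ρde t + pde t)) := by linarith
      rw [hm', hd']
      field_simp
      ring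
    have hEv : (fun s => κ ^ 2 * ρde s / (3 * (a' s / a s) ^ 2))
        =ᶠ[nhds t] (fun s => ρde s / (ρm s + ρde s)) :=
      Filter.eventuallyEq_of_mem (hI.mem_nhds ht) (fun s hs => heq s hs)
    exact hval ▸ hg.congr_of_eventuallyEq hEv
  refine ⟨main, ?_⟩
  intro c hc0 hc1 hconst t ht
  -- derivative of the constant Ω is zero
  have hEv : (fun s => κ ^ 2 * ρde s / (3 * (a' s / a s) ^ 2))
      =ᶠ[nhds t] (fun _ => c) :=
    Filter.eventuallyEq_of_mem (hI.mem_nhds ht) (fun s hs => hconst s hs)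
  have hzero : HasDerivAt (fun s => κ ^ 2 * ρde s / (3 * (a' s / a s) ^ 2)) 0 t :=
    (hasDerivAt_const t c).congr_of_eventuallyEq hEv
  have huniq := (main t ht).unique hzero
  rw [hconst t ht] at huniq
  have hHt := hH t ht
  have hw : pm t / ρm t - pde t / ρde t = 0 := by
    have h1 : 3 * (a' t / a t) * c * (1 - c) ≠ 0 := by
      have h2 : 0 < 1 - c := by linarith
      have := hH t ht
      positivity
    have := mul_eq_zero.mp huniq
    rcases this with h | h
    · exact absurd h h1
    · exact h
  have hwe : pde t / ρde t = pm t / ρm t := by linarith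
  refine ⟨hwe, ?_, ?_⟩
  · rw [hwe, hconst t ht]; ring
  · intro hnn hlt
    rw [hwe, hconst t ht] at hlt
    have : pm t / ρm t * (1 - c) + pm t / ρm t * c = pm t / ρm t := by ring
    rw [this] at hlt
    linarith
end

section
/- Let w > -1 and β be real constants with β > 1/2 or β < 0, set α = 2β/(2β-1) > 0, and let c₅ > 0, c₆ > 0. Define for η ∈ ℝ the functions γ(η) = (c₅e^{3η} + 1/α)^{-1} and Ω(η) = [c₆(c₅αe^{3η}+1)^{-α}e^{3(α-w-1)η} + 1]^{-1}. Then: (i) γ'(η) = 3γ(η)·((2β-1)γ(η)/(2β) - 1) for all η; (ii) Ω'(η) = 3(w+1-γ(η))·Ω(η)·(1-Ω(η)) for all η; (iii) γ(η) → α = 2β/(2β-1) as η → -∞ and γ(η) → 0 as η → +∞; (iv) Ω(η) → 1 as η → +∞. Thus the purely kinetic k-essence fluid behaves like a barotropic fluid with equation-of-state parameter w_φ = α - 1 at early times and like a cosmological constant (w_φ → -1) dominating the universe at late times. -/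
open Real Filter Topology

/-! Both `γ = u⁻¹` and `Ω = (t + 1)⁻¹` are reciprocals of solutions of linear equations, and the
reciprocal of a solution of `v' = m (v - a)` solves the logistic equation `u' = m u (a u - 1)`.
Here `u = c₅ e^{3η} + 1/α` satisfies `u' = 3 (u - 1/α)`, and `t = c₆ f^{-α} e^{3(α-w-1)η}`, with
`f = c₅ α e^{3η} + 1 = α / γ`, has logarithmic derivative `-3α (f - 1)/f + 3(α-w-1) = 3γ - 3(w+1)`.
For the limits, `u → 1/α` at `-∞` and `u → ∞` at `+∞`, while
`t ≤ c₆ (c₅ α)^{-α} e^{-3(w+1)η} → 0` since `w > -1`. -/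

theorem two_mul_div_two_mul_sub_one_pos {β : ℝ} (hβ : 1 / 2 < β ∨ β < 0) :
    0 < 2 * β / (2 * β - 1) := by
  rcases hβ with h | h
  · exact div_pos (by linarith) (by linarith)
  · exact div_pos_of_neg_of_neg (by linarith) (by linarith)

theorem HasDerivAt.inv_of_affine {v : ℝ → ℝ} {m a x : ℝ} (hv : HasDerivAt v (m * (v x - a)) x)
    (hx : v x ≠ 0) :
    HasDerivAt (fun y => (v y)⁻¹) (m * (v x)⁻¹ * (a * (v x)⁻¹ - 1)) x :=
  (hv.inv hx).congr_deriv (by field_simp; ring)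

theorem hasDerivAt_mul_exp_add (c k a x : ℝ) :
    HasDerivAt (fun y => c * exp (k * y) + a) (k * (c * exp (k * x) + a - a)) x :=
  ((((hasDerivAt_id' x).const_mul k).exp.const_mul c).add_const a).congr_deriv (by ring)

theorem HasDerivAt.const_mul_rpow_mul_exp {f : ℝ → ℝ} {f' c p k x : ℝ}
    (hf : HasDerivAt f f' x) (hx : 0 < f x) :
    HasDerivAt (fun y => c * f y ^ p * Real.exp (k * y))
      ((p * f' / f x + k) * (c * f x ^ p * Real.exp (k * x))) x := by
  refine (((hf.rpow_const (Or.inl hx.ne')).const_mul c).mul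
    ((hasDerivAt_id' x).const_mul k).exp).congr_deriv ?_
  rw [rpow_sub_one hx.ne']
  field_simp

theorem tendsto_mul_exp_add_atBot (c a : ℝ) {k : ℝ} (hk : 0 < k) :
    Tendsto (fun y => c * exp (k * y) + a) atBot (𝓝 a) := by
  have h : Tendsto (fun y => exp (k * y)) atBot (𝓝 0) :=
    tendsto_exp_comp_nhds_zero.2 (tendsto_id.const_mul_atBot hk)
  simpa using (h.const_mul c).add_const a

theorem tendsto_mul_exp_add_atTop (a : ℝ) {c k : ℝ} (hc : 0 < c) (hk : 0 < k) :
    Tendsto (fun y => c * exp (k * y) + a) atTop atTop :=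
  tendsto_atTop_add_const_right _ a <|
    (tendsto_exp_comp_atTop.2 (tendsto_id.const_mul_atTop hk)).const_mul_atTop hc

theorem tendsto_mul_exp_add_one_rpow_neg_mul_exp {c s p k : ℝ} (hc : 0 < c) (hp : 0 ≤ p)
    (hk : k < s * p) :
    Tendsto (fun y => (c * exp (s * y) + 1) ^ (-p) * exp (k * y)) atTop (𝓝 0) := by
  have hbound : ∀ y, (c * exp (s * y) + 1) ^ (-p) * exp (k * y)
      ≤ c ^ (-p) * exp ((k - s * p) * y) := fun y =>
    calc (c * exp (s * y) + 1) ^ (-p) * exp (k * y)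
        ≤ (c * exp (s * y)) ^ (-p) * exp (k * y) := by
          gcongr ?_ * _
          exact rpow_le_rpow_of_nonpos (by positivity) (by linarith) (by linarith)
      _ = c ^ (-p) * exp ((k - s * p) * y) := by
          rw [mul_rpow hc.le (exp_pos _).le, ← exp_mul, mul_assoc, ← exp_add]
          ring_nf
  have hlim : Tendsto (fun y => c ^ (-p) * exp ((k - s * p) * y)) atTop (𝓝 0) := by
    simpa using (tendsto_exp_comp_nhds_zero.2
      (tendsto_id.const_mul_atTop_of_neg (sub_neg.2 hk))).const_mul (c ^ (-p))
  exact squeeze_zero (fun y => by positivity) hbound hlim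

/-- Purely kinetic k-essence `P = A₁√X - A₂X^β`: the exact solution of the system
`Ω' = 3(w+1-γ)Ω(1-Ω)`, `γ' = 3γ((2β-1)γ/(2β)-1)` satisfies the equations, tends to
`γ → α = 2β/(2β-1)` (barotropic behaviour) at early times, and to `γ → 0`, `Ω → 1`
(cosmological-constant domination) at late times. -/
theorem purely_kinetic_k_essence_solution
    (w β c₅ c₆ α : ℝ) (hw : -1 < w) (hβ : 1 / 2 < β ∨ β < 0)
    (hc₅ : 0 < c₅) (hc₆ : 0 < c₆) (hα : α = 2 * β / (2 * β - 1))
    (γ Ω : ℝ → ℝ)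
    (hγ : ∀ η : ℝ, γ η = (c₅ * Real.exp (3 * η) + 1 / α)⁻¹)
    (hΩ : ∀ η : ℝ,
      Ω η = (c₆ * (c₅ * α * Real.exp (3 * η) + 1) ^ (-α)
        * Real.exp (3 * (α - w - 1) * η) + 1)⁻¹) :
    0 < α ∧
    (∀ η : ℝ, HasDerivAt γ (3 * γ η * ((2 * β - 1) * γ η / (2 * β) - 1)) η) ∧
    (∀ η : ℝ, HasDerivAt Ω (3 * (w + 1 - γ η) * Ω η * (1 - Ω η)) η) ∧
    Tendsto γ atBot (nhds α) ∧
    Tendsto γ atTop (nhds 0) ∧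
    Tendsto Ω atTop (nhds 1) := by
  have hα0 : 0 < α := hα ▸ two_mul_div_two_mul_sub_one_pos hβ
  have hαinv : 1 / α = (2 * β - 1) / (2 * β) := by rw [hα, one_div_div]
  obtain rfl := funext hγ
  obtain rfl := funext hΩ
  have hf : ∀ η, 0 < c₅ * α * exp (3 * η) + 1 := fun η => by positivity
  refine ⟨hα0, fun η => ?_, fun η => ?_, ?_, ?_, ?_⟩
  · exact ((hasDerivAt_mul_exp_add c₅ 3 (1 / α) η).inv_of_affine (by positivity)).congr_deriv
      (by rw [hαinv]; ring)
  · have ht := ((hasDerivAt_mul_exp_add (c₅ * α) 3 1 η).const_mul_rpow_mul_exp (c := c₆)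
      (p := -α) (k := 3 * (α - w - 1)) (hf η)).add_const 1
    have hγf : (c₅ * exp (3 * η) + 1 / α)⁻¹ = α / (c₅ * α * exp (3 * η) + 1) := by
      field_simp
    refine ((ht.congr_deriv ?_).inv_of_affine (m := -3 * (w + 1 - (c₅ * exp (3 * η) + 1 / α)⁻¹))
      (a := 1) (by positivity)).congr_deriv (by ring)
    rw [hγf]
    field_simp
    ring
  · simpa using (tendsto_mul_exp_add_atBot c₅ (1 / α) three_pos).inv₀ (by positivity)
  · exact tendsto_inv_atTop_zero.comp (tendsto_mul_exp_add_atTop _ hc₅ three_pos)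
  · have := (((tendsto_mul_exp_add_one_rpow_neg_mul_exp (mul_pos hc₅ hα0) hα0.le
      (s := 3) (k := 3 * (α - w - 1)) (by linarith)).const_mul c₆).add_const 1).inv₀ (by simp)
    simpa [mul_assoc] using this
end
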